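/- In the weak commutativity group χ(G), the subgroup L₁₂ = ⁅L₁,L₂⁆ is contained in R = ⁅⁅G₁,L⁆,G₂⁆. -/

import Mathlib

open Subgroup

/-- The weak commutativity relations inside the free product `G ∗ G`. -/
def chiRel (G : Type*) [Group G] : Subgroup (Monoid.Coprod G G) :=
  Subgroup.normalClosure
    {x | ∃ g : G, x = Monoid.Coprod.inl g * Monoid.Coprod.inr g *
      (Monoid.Coprod.inl g)⁻¹ * (Monoid.Coprod.inr g)⁻¹}

instance chiRel_normal (G : Type*) [Group G] : (chiRel G).Normal :=
  Subgroup.normalClosure_normal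

/-- The weak commutativity group `χ(G)`. -/
def Chi (G : Type*) [Group G] : Type _ := Monoid.Coprod G G ⧸ chiRel G

instance (G : Type*) [Group G] : Group (Chi G) :=
  inferInstanceAs (Group (Monoid.Coprod G G ⧸ chiRel G))

/-- The canonical map `G → χ(G)`, `g ↦ g`. -/
def chiIota1 (G : Type*) [Group G] : G →* Chi G :=
  (QuotientGroup.mk' (chiRel G)).comp Monoid.Coprod.inl

/-- The canonical map `G → χ(G)`, `g ↦ g^φ`. -/
def chiIota2 (G : Type*) [Group G] : G →* Chi G :=
  (QuotientGroup.mk' (chiRel G)).comp Monoid.Coprod.inr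

/-- `G₁ ≤ χ(G)`. -/
def chiG1 (G : Type*) [Group G] : Subgroup (Chi G) := (chiIota1 G).range

/-- `G₂ = G^φ ≤ χ(G)`. -/
def chiG2 (G : Type*) [Group G] : Subgroup (Chi G) := (chiIota2 G).range

/-- `L = ⟨g⁻¹ g^φ : g ∈ G⟩`. -/
def chiL (G : Type*) [Group G] : Subgroup (Chi G) :=
  Subgroup.closure {x | ∃ g : G, x = (chiIota1 G g)⁻¹ * chiIota2 G g}

/-- `D = ⁅G₁, G₂⁆`. -/
def chiD (G : Type*) [Group G] : Subgroup (Chi G) := ⁅chiG1 G, chiG2 G⁆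

/-- `L₁ = ⁅L, G₁⁆`. -/
def chiL1 (G : Type*) [Group G] : Subgroup (Chi G) := ⁅chiL G, chiG1 G⁆

/-- `L₂ = ⁅L, G₂⁆`. -/
def chiL2 (G : Type*) [Group G] : Subgroup (Chi G) := ⁅chiL G, chiG2 G⁆

/-- `R = ⁅⁅G₁, L⁆, G₂⁆`. -/
def chiR (G : Type*) [Group G] : Subgroup (Chi G) := ⁅⁅chiG1 G, chiL G⁆, chiG2 G⁆

/-- `L₁₂ = ⁅L₁, L₂⁆`. -/
def chiL12 (G : Type*) [Group G] : Subgroup (Chi G) := ⁅chiL1 G, chiL2 G⁆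

/-!
The relation `⁅g, g^φ⁆ = 1`, applied to `g`, `h` and `g⁻¹ h`, gives the mirror identity
`⁅g^φ, h⁆ = ⁅g, h^φ⁆`, and expanding it for a product shows that `L` centralizes `D = ⁅G₁, G₂⁆`.
`L₁` is normal because `L` and `G₁` generate `χ(G)`, and `R = ⁅L₁, G₂⁆` is normal because
conjugating `G₂` by `G₁` only changes it by elements of `D`, which `L₁ ≤ L` centralizes. Modulo `R`,
the normal subgroup `L₁` then centralizes `G₂`, hence its normal closure, which contains
`L₂ = ⁅L, G₂⁆`.
-/

open scoped commutatorElement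

section GroupTheory

variable {G : Type*} [Group G]

theorem commutatorElement_eq_of_commute {a b x y : G} (hax : Commute a x) (hby : Commute b y)
    (h : Commute (a⁻¹ * b) (x⁻¹ * y)) : ⁅x, b⁆ = ⁅a, y⁆ := by
  rw [commutatorElement_def, commutatorElement_def]
  calc x * b * x⁻¹ * b⁻¹ = x * a * (a⁻¹ * b * (x⁻¹ * y)) * y⁻¹ * b⁻¹ := by group
    _ = x * a * (x⁻¹ * y * (a⁻¹ * b)) * y⁻¹ * b⁻¹ := by rw [h.eq]
    _ = (x * a * x⁻¹) * y * a⁻¹ * (b * y⁻¹ * b⁻¹) := by group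
    _ = a * y * a⁻¹ * y⁻¹ := by
      rw [hax.symm.mul_inv_cancel, hby.inv_right.mul_inv_cancel]

theorem commutatorElement_mul_right_of_commute {u q δ : G} (h : Commute u δ) :
    ⁅u, q * δ⁆ = ⁅u, q⁆ := by
  rw [commutatorElement_def, commutatorElement_def, mul_inv_rev]
  calc u * (q * δ) * u⁻¹ * (δ⁻¹ * q⁻¹) = u * q * (δ * u⁻¹ * δ⁻¹) * q⁻¹ := by group
    _ = u * q * u⁻¹ * q⁻¹ := by rw [h.inv_left.symm.mul_inv_cancel]

theorem Subgroup.normal_of_sup_le_normalizer {H K N : Subgroup G} (hHK : H ⊔ K = ⊤)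
    (hH : H ≤ normalizer (N : Set G)) (hK : K ≤ normalizer (N : Set G)) : N.Normal :=
  normalizer_eq_top_iff.mp <| top_le_iff.mp <| hHK ▸ sup_le hH hK

theorem Subgroup.commutator_le_iff_le_comap_centralizer {A B N : Subgroup G} [N.Normal] :
    ⁅A, B⁆ ≤ N ↔ B ≤ (centralizer (A.map (QuotientGroup.mk' N))).comap (QuotientGroup.mk' N) := by
  rw [← map_le_iff_le_comap, ← commutator_eq_bot_iff_le_centralizer, ← map_commutator,
    commutator_comm, map_eq_bot_iff, QuotientGroup.ker_mk']

theorem Subgroup.commutator_normalClosure_le {A B N : Subgroup G} [A.Normal] [N.Normal]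
    (h : ⁅A, B⁆ ≤ N) : ⁅A, normalClosure (B : Set G)⁆ ≤ N := by
  rw [commutator_le_iff_le_comap_centralizer] at h ⊢
  have : (A.map (QuotientGroup.mk' N)).Normal := ‹A.Normal›.map _ (QuotientGroup.mk'_surjective N)
  exact normalClosure_le_normal h

end GroupTheory

section Chi

variable {G : Type*} [Group G]

local notation "ι₁" => chiIota1 G
local notation "ι₂" => chiIota2 G

theorem chiIota1_commute_chiIota2 (g : G) : Commute (ι₁ g) (ι₂ g) := by
  have h : Monoid.Coprod.inl g * Monoid.Coprod.inr g * (Monoid.Coprod.inl g)⁻¹ *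
      (Monoid.Coprod.inr g)⁻¹ ∈ chiRel G :=
    subset_normalClosure ⟨g, rfl⟩
  rw [← QuotientGroup.eq_one_iff, ← commutatorElement_def] at h
  exact commutatorElement_eq_one_iff_commute.mp h

theorem chiIota2_commutator_chiIota1 (g h : G) : ⁅ι₂ g, ι₁ h⁆ = ⁅ι₁ g, ι₂ h⁆ := by
  refine commutatorElement_eq_of_commute (chiIota1_commute_chiIota2 g)
    (chiIota1_commute_chiIota2 h) ?_
  simpa only [map_mul, map_inv] using chiIota1_commute_chiIota2 (g⁻¹ * h)

theorem chiL_generator_commute_chiD_generator (g w h : G) :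
    Commute ((ι₁ g)⁻¹ * ι₂ g) ⁅ι₁ w, ι₂ h⁆ := by
  -- expand both sides of the mirror identity for `g * w` and `h`
  have hconj : ι₂ g * ⁅ι₁ w, ι₂ h⁆ * (ι₂ g)⁻¹ = ι₁ g * ⁅ι₁ w, ι₂ h⁆ * (ι₁ g)⁻¹ := by
    have := chiIota2_commutator_chiIota1 (g * w) h
    rw [map_mul, map_mul, commutatorElement_mul_left_eq_conj_mul,
      commutatorElement_mul_left_eq_conj_mul, chiIota2_commutator_chiIota1,
      chiIota2_commutator_chiIota1] at this
    exact mul_right_cancel this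
  calc (ι₁ g)⁻¹ * ι₂ g * ⁅ι₁ w, ι₂ h⁆
      = (ι₁ g)⁻¹ * (ι₂ g * ⁅ι₁ w, ι₂ h⁆ * (ι₂ g)⁻¹) * ι₂ g := by group
    _ = ⁅ι₁ w, ι₂ h⁆ * ((ι₁ g)⁻¹ * ι₂ g) := by rw [hconj]; group

theorem chiL_le_centralizer_chiD : chiL G ≤ centralizer (chiD G) := by
  rw [chiL, closure_le]
  rintro _ ⟨g, rfl⟩
  suffices chiD G ≤ centralizer {(ι₁ g)⁻¹ * ι₂ g} from
    fun d hd ↦ mem_centralizer_singleton_iff.mp (this hd)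
  rw [chiD, commutator_le]
  rintro _ ⟨w, rfl⟩ _ ⟨h, rfl⟩
  exact mem_centralizer_singleton_iff.mpr (chiL_generator_commute_chiD_generator g w h).eq.symm

theorem chiG1_sup_chiG2 : chiG1 G ⊔ chiG2 G = ⊤ := by
  have := map_top_of_surjective _ (QuotientGroup.mk'_surjective (chiRel G))
  rwa [← Monoid.Coprod.range_inl_sup_range_inr, Subgroup.map_sup, ← MonoidHom.range_comp,
    ← MonoidHom.range_comp] at this

theorem chiL_sup_chiG1 : chiL G ⊔ chiG1 G = ⊤ := by
  rw [eq_top_iff, ← chiG1_sup_chiG2]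
  refine sup_le le_sup_right ?_
  rintro _ ⟨g, rfl⟩
  rw [← mul_inv_cancel_left (ι₁ g) (ι₂ g)]
  exact mul_mem (mem_sup_right ⟨g, rfl⟩) (mem_sup_left (subset_closure ⟨g, rfl⟩))

theorem chiG1_le_normalizer_chiL : chiG1 G ≤ normalizer (chiL G : Set (Chi G)) := by
  rw [chiL, le_normalizer_closure_iff]
  rintro _ ⟨k, rfl⟩ _ ⟨g, rfl⟩
  have : ι₁ k * ((ι₁ g)⁻¹ * ι₂ g) * (ι₁ k)⁻¹
      = (ι₁ (g * k⁻¹))⁻¹ * ι₂ (g * k⁻¹) * ((ι₁ k⁻¹)⁻¹ * ι₂ k⁻¹)⁻¹ := by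
    simp only [map_mul, map_inv]; group
  rw [this]
  exact mul_mem (subset_closure ⟨_, rfl⟩) (inv_mem (subset_closure ⟨_, rfl⟩))

theorem chiL1_le_chiL : chiL1 G ≤ chiL G :=
  le_normalizer_iff_commutator_le_left.mp chiG1_le_normalizer_chiL

instance chiL1_normal : (chiL1 G).Normal :=
  normal_of_sup_le_normalizer chiL_sup_chiG1 (normalizer_commutator_ge_left _ _)
    (normalizer_commutator_ge_right _ _)

theorem chiR_eq_commutator_chiL1_chiG2 : chiR G = ⁅chiL1 G, chiG2 G⁆ := by
  rw [chiR, chiL1, commutator_comm (chiG1 G)]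

theorem chiG1_le_normalizer_chiR : chiG1 G ≤ normalizer (chiR G : Set (Chi G)) := by
  rw [chiR_eq_commutator_chiL1_chiG2, Subgroup.commutator_def, le_normalizer_closure_iff]
  rintro t ht _ ⟨u, hu, q, hq, rfl⟩
  have hδ : ⁅q⁻¹, t⁆ ∈ chiD G := by
    rw [chiD, commutator_comm]
    exact commutator_mem_commutator (inv_mem hq) ht
  have hu' : t * u * t⁻¹ ∈ chiL1 G := chiL1_normal.conj_mem u hu t
  have hcomm : Commute (t * u * t⁻¹) ⁅q⁻¹, t⁆ :=
    (chiL_le_centralizer_chiD (chiL1_le_chiL hu') _ hδ).symm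
  have hconj : t * q * t⁻¹ = q * ⁅q⁻¹, t⁆ := by rw [commutatorElement_def]; group
  rw [conjugate_commutatorElement, hconj, commutatorElement_mul_right_of_commute hcomm]
  exact subset_closure ⟨_, hu', q, hq, rfl⟩

instance chiR_normal : (chiR G).Normal :=
  normal_of_sup_le_normalizer chiG1_sup_chiG2 chiG1_le_normalizer_chiR
    (by rw [chiR_eq_commutator_chiL1_chiG2]; exact normalizer_commutator_ge_right _ _)

end Chi

theorem chiL12_le_chiR (G : Type*) [Group G] : chiL12 G ≤ chiR G := by
  have hL2 : chiL2 G ≤ normalClosure (chiG2 G : Set (Chi G)) :=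
    (commutator_mono le_rfl le_normalClosure).trans (commutator_le_right _ _)
  calc chiL12 G ≤ ⁅chiL1 G, normalClosure (chiG2 G : Set (Chi G))⁆ := commutator_mono le_rfl hL2
    _ ≤ chiR G := commutator_normalClosure_le chiR_eq_commutator_chiL1_chiG2.ge
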